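/- arXiv:2403.01264 — 3 statements merged into one kernel-verified Lean document; each statement's English description precedes it below -/
import Mathlib

section
/- For all real numbers u_pt, u_x, u_x2, the quadratic polynomial P(x) = u_pt + u_x·L₁(x) + u_x2·L₂(x) has smoothness indicator β(P) = (u_x)² + (13/3)·(u_x2)²; i.e., the Jiang–Shu smoothness indicator of any quadratic written in the shifted Legendre basis is the sum of two perfect squares with these coefficients. -/
open Polynomial

/-- Legendre polynomial `L₁ = x` shifted to `[−1/2, 1/2]`, as a real polynomial. -/
noncomputable def L1 : ℝ[X] := X

/-- Legendre polynomial `L₂ = x² − 1/12` shifted to `[−1/2, 1/2]`, as a real polynomial. -/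
noncomputable def L2 : ℝ[X] := X ^ 2 - C (1 / 12)

/-- The Jiang–Shu smoothness indicator of a real polynomial on the unit zone `[−1/2, 1/2]`:
`β(P) = Σ_{l=1}^{deg P} ∫_{−1/2}^{1/2} (P⁽ˡ⁾(x))² dx`. -/
noncomputable def beta (P : ℝ[X]) : ℝ :=
  ∑ l ∈ Finset.Icc 1 P.natDegree,
    ∫ x in (-(1 : ℝ) / 2)..(1 / 2), ((derivative^[l] P).eval x) ^ 2

lemma integral_linear_sq (a b : ℝ) :
    ∫ x in (-(1 : ℝ) / 2)..(1 / 2), (a + b * x) ^ 2 = a ^ 2 + b ^ 2 / 12 := by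
  have h : ∀ x : ℝ, HasDerivAt (fun x : ℝ => a ^ 2 * x + a * b * x ^ 2 + b ^ 2 * x ^ 3 / 3)
      ((a + b * x) ^ 2) x := by
    intro x
    have h1 : HasDerivAt (fun x : ℝ => a ^ 2 * x + a * b * x ^ 2 + b ^ 2 * x ^ 3 / 3)
        (a ^ 2 * 1 + a * b * (2 * x ^ 1) + b ^ 2 * (3 * x ^ 2) / 3) x :=
      (((hasDerivAt_id x).const_mul (a^2)).add ((hasDerivAt_pow 2 x).const_mul (a*b))).add
        (((hasDerivAt_pow 3 x).const_mul (b^2)).div_const 3)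
    convert h1 using 1; ring
  rw [intervalIntegral.integral_eq_sub_of_hasDerivAt (fun x _ => h x)
    (by apply Continuous.intervalIntegrable; continuity)]
  ring

/-- The Jiang–Shu smoothness indicator of any quadratic written in the shifted Legendre
basis is `(u_x)² + (13/3)(u_x2)²`. -/
theorem smoothness_indicator_r3 (upt ux ux2 : ℝ) :
    beta (C upt + C ux * L1 + C ux2 * L2) = ux ^ 2 + (13 / 3) * ux2 ^ 2 := by
  have hP : C upt + C ux * L1 + C ux2 * L2
      = C ux2 * X ^ 2 + C ux * X + C (upt - ux2 / 12) := by
    simp only [L1, L2, map_sub, sub_div]; ring_nf; rw [← C_mul]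
  set c : ℝ := upt - ux2 / 12 with hc
  rw [hP]
  set P : ℝ[X] := C ux2 * X ^ 2 + C ux * X + C c with hPdef
  have hd1 : derivative P = C (2 * ux2) * X + C ux := by
    simp [hPdef, derivative_pow]; ring
  have hd2 : derivative (C (2 * ux2) * X + C ux) = C (2 * ux2) := by simp
  have hI1 : (∫ x in (-(1 : ℝ) / 2)..(1 / 2), ((derivative^[1] P).eval x) ^ 2)
      = ux ^ 2 + (2 * ux2) ^ 2 / 12 := by
    simp only [Function.iterate_one, hd1]
    have := integral_linear_sq ux (2 * ux2)
    rw [← this]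
    congr 1; ext x; simp [add_comm]
  have hI2 : (∫ x in (-(1 : ℝ) / 2)..(1 / 2), ((derivative^[2] P).eval x) ^ 2)
      = (2 * ux2) ^ 2 := by
    simp only [Function.iterate_succ, Function.iterate_one, Function.comp_apply, hd1, hd2]
    simp; norm_num
  by_cases h2 : ux2 = 0
  · subst h2
    by_cases h1 : ux = 0
    · subst h1
      have : P = C c := by simp [hPdef]
      rw [beta, this]
      simp
    · have hlin : P = C ux * X + C c := by simp [hPdef]
      have : P.natDegree = 1 := by rw [hlin]; exact natDegree_linear h1
      rw [beta, this]
      simp only [show Finset.Icc 1 1 = {1} from rfl, Finset.sum_singleton]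
      rw [hI1]; ring
  · have : P.natDegree = 2 := by
      rw [hPdef]; exact natDegree_quadratic h2
    rw [beta, this]
    rw [show Finset.Icc 1 2 = {1, 2} from rfl, Finset.sum_insert (by decide), Finset.sum_singleton]
    rw [hI1, hI2]; ring
end

section
/- For all real numbers u_pt, u_x, u_x2, u_x3, u_x4, the quartic polynomial P(x) = u_pt + u_x·L₁(x) + u_x2·L₂(x) + u_x3·L₃(x) + u_x4·L₄(x) has smoothness indicator β(P) = (u_x + u_x3/10)² + (13/3)·(u_x2 + (123/455)·u_x4)² + (781/20)·(u_x3)² + (1421461/2275)·(u_x4)². -/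
open Polynomial

/-- Legendre polynomial `L₃` shifted to `[−1/2, 1/2]`, as a real polynomial. -/
noncomputable def L3 : ℝ[X] := X ^ 3 - C (3 / 20) * X

/-- Legendre polynomial `L₄` shifted to `[−1/2, 1/2]`, as a real polynomial. -/
noncomputable def L4 : ℝ[X] := X ^ 4 - C (3 / 14) * X ^ 2 + C (3 / 560)

/-! Since `∫_{-1/2}^{1/2} x^k dx` is `0` for odd `k` and `1 / (2^k (k + 1))` for even `k`, the
indicator of a quartic `∑ pₖ xᵏ` is an explicit quadratic form in `p₁, …, p₄`. The quartic
in the Legendre basis has `p₁ = u_x − 3u_x3/20`, `p₂ = u_x2 − 3u_x4/14`, `p₃ = u_x3`, `p₄ = u_x4`,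
and substituting these and completing squares gives the claimed sum of squares. -/

open intervalIntegral in
theorem integral_sq_eval_eq_sum {Q : ℝ[X]} {n : ℕ} (hQ : Q.natDegree < n) (a b : ℝ) :
    ∫ x in a..b, (Q.eval x) ^ 2 = ∑ i ∈ Finset.range n, ∑ j ∈ Finset.range n,
      Q.coeff i * Q.coeff j * ((b ^ (i + j + 1) - a ^ (i + j + 1)) / (i + j + 1)) := by
  have hmonomial (x : ℝ) (i j : ℕ) :
      Q.coeff i * x ^ i * (Q.coeff j * x ^ j) = Q.coeff i * Q.coeff j * x ^ (i + j) := by ring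
  simp_rw [eval_eq_sum_range' hQ, sq, Finset.sum_mul_sum, hmonomial]
  rw [integral_finsetSum fun i _ => (by fun_prop : Continuous _).intervalIntegrable _ _]
  refine Finset.sum_congr rfl fun i _ => ?_
  rw [integral_finsetSum fun j _ => (intervalIntegrable_pow _).const_mul _]
  simp only [integral_const_mul, integral_pow, Nat.cast_add]

theorem beta_eq_sum_Icc_of_natDegree_le {P : ℝ[X]} {n : ℕ} (h : P.natDegree ≤ n) :
    beta P = ∑ l ∈ Finset.Icc 1 n,
      ∫ x in -(1 : ℝ) / 2..1 / 2, ((derivative^[l] P).eval x) ^ 2 := by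
  refine Finset.sum_subset (Finset.Icc_subset_Icc_right h) fun l hl hl' => ?_
  rw [iterate_derivative_eq_zero (by grind)]
  simp

theorem beta_eq_of_natDegree_le_four {P : ℝ[X]} (hP : P.natDegree ≤ 4) :
    beta P = P.coeff 1 ^ 2 + P.coeff 1 * P.coeff 3 / 2 + 13 / 3 * P.coeff 2 ^ 2
      + 21 / 5 * P.coeff 2 * P.coeff 4 + 3129 / 80 * P.coeff 3 ^ 2
      + 87617 / 140 * P.coeff 4 ^ 2 := by
  have hderiv (l : ℕ) (hl : l ∈ Finset.Icc 1 4) : (derivative^[l] P).natDegree < 4 :=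
    (natDegree_iterate_derivative P l).trans_lt (by grind)
  have hvanish (k : ℕ) (hk : 4 < k) : P.coeff k = 0 :=
    coeff_eq_zero_of_natDegree_lt (hP.trans_lt hk)
  rw [beta_eq_sum_Icc_of_natDegree_le hP,
    Finset.sum_congr rfl fun l hl => integral_sq_eval_eq_sum (hderiv l hl) _ _]
  norm_num [show Finset.Icc 1 4 = {1, 2, 3, 4} from rfl, Finset.sum_range_succ,
    coeff_iterate_derivative, Nat.descFactorial, hvanish]
  ring

noncomputable def legendreQuartic (u₀ u₁ u₂ u₃ u₄ : ℝ) : ℝ[X] :=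
  C u₀ + C u₁ * L1 + C u₂ * L2 + C u₃ * L3 + C u₄ * L4

theorem natDegree_legendreQuartic_le (u₀ u₁ u₂ u₃ u₄ : ℝ) :
    (legendreQuartic u₀ u₁ u₂ u₃ u₄).natDegree ≤ 4 := by
  unfold legendreQuartic L1 L2 L3 L4
  compute_degree

theorem coeff_legendreQuartic (u₀ u₁ u₂ u₃ u₄ : ℝ) :
    (legendreQuartic u₀ u₁ u₂ u₃ u₄).coeff 1 = u₁ - 3 / 20 * u₃ ∧
      (legendreQuartic u₀ u₁ u₂ u₃ u₄).coeff 2 = u₂ - 3 / 14 * u₄ ∧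
      (legendreQuartic u₀ u₁ u₂ u₃ u₄).coeff 3 = u₃ ∧
      (legendreQuartic u₀ u₁ u₂ u₃ u₄).coeff 4 = u₄ := by
  unfold legendreQuartic L1 L2 L3 L4
  simp [coeff_C, coeff_X_pow, sub_eq_add_neg, mul_comm _ (3 / 20 : ℝ), mul_comm _ (3 / 14 : ℝ)]

/-- The Jiang–Shu smoothness indicator of any quartic written in the shifted Legendre
basis is a sum of perfect squares. -/
theorem smoothness_indicator_r5 (upt ux ux2 ux3 ux4 : ℝ) :
    beta (C upt + C ux * L1 + C ux2 * L2 + C ux3 * L3 + C ux4 * L4) =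
      (ux + ux3 / 10) ^ 2 + (13 / 3) * (ux2 + (123 / 455) * ux4) ^ 2
        + (781 / 20) * ux3 ^ 2 + (1421461 / 2275) * ux4 ^ 2 := by
  change beta (legendreQuartic upt ux ux2 ux3 ux4) = _
  obtain ⟨h₁, h₂, h₃, h₄⟩ := coeff_legendreQuartic upt ux ux2 ux3 ux4
  rw [beta_eq_of_natDegree_le_four (natDegree_legendreQuartic_le ..), h₁, h₂, h₃, h₄]
  ring
end

section
/- For all real numbers u_pt, u_x, u_x2, u_x3, u_x4, u_x5, u_x6, the degree-6 polynomial P(x) = u_pt + u_x·L₁(x) + u_x2·L₂(x) + u_x3·L₃(x) + u_x4·L₄(x) + u_x5·L₅(x) + u_x6·L₆(x) has smoothness indicator β(P) = (u_x + u_x3/10 + u_x5/126)² + (13/3)·(u_x2 + (123/455)·u_x4 + (85/2002)·u_x6)² + (781/20)·(u_x3 + (26045/49203)·u_x5)² + (1421461/2275)·(u_x4 + (81596225/93816426)·u_x6)² + (21520059541/1377684)·(u_x5)² + (15510384942580921/27582029244)·(u_x6)². -/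
open Polynomial

/-- Legendre polynomial `L₅` shifted to `[−1/2, 1/2]`, as a real polynomial. -/
noncomputable def L5 : ℝ[X] := X ^ 5 - C (5 / 18) * X ^ 3 + C (5 / 336) * X

/-- Legendre polynomial `L₆` shifted to `[−1/2, 1/2]`, as a real polynomial. -/
noncomputable def L6 : ℝ[X] :=
  X ^ 6 - C (15 / 44) * X ^ 4 + C (5 / 176) * X ^ 2 - C (5 / 14784)

/-!
Writing `P⁽ˡ⁾ = ∑ᵢ (i+l)!/i! · pᵢ₊ₗ xⁱ` in terms of the monomial coefficients `pₖ` of `P`, each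
`∫ (P⁽ˡ⁾)²` becomes a quadratic form in the `pₖ` whose Gram entries are the moments
`∫_{-1/2}^{1/2} x^k dx`. For the polynomial of the theorem the `pₖ` are linear in the Legendre
coordinates, so `β(P)` is an explicit quadratic form in them, and the stated sum of squares is
its `LDLᵀ` factorization.
-/

open Finset

theorem integral_sq_eval_eq_sum_coeff (p : ℝ[X]) {n : ℕ} (hn : p.natDegree < n) (a b : ℝ) :
    ∫ x in a..b, (p.eval x) ^ 2 = ∑ i ∈ range n, ∑ j ∈ range n,
      p.coeff i * p.coeff j * ((b ^ (i + j + 1) - a ^ (i + j + 1)) / (i + j + 1)) := by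
  simp_rw [eval_eq_sum_range' hn, sq, sum_mul_sum]
  rw [intervalIntegral.integral_finsetSum fun i _ =>
    (by fun_prop : Continuous _).intervalIntegrable _ _]
  refine sum_congr rfl fun i _ => ?_
  rw [intervalIntegral.integral_finsetSum fun j _ =>
    (by fun_prop : Continuous _).intervalIntegrable _ _]
  refine sum_congr rfl fun j _ => ?_
  have hmul : ∀ x : ℝ,
      p.coeff i * x ^ i * (p.coeff j * x ^ j) = p.coeff i * p.coeff j * x ^ (i + j) :=
    fun x => by ring
  simp_rw [hmul, intervalIntegral.integral_const_mul, integral_pow]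
  push_cast
  rfl

theorem beta_eq_sum_coeff (P : ℝ[X]) {n : ℕ} (hn : P.natDegree ≤ n) :
    beta P = ∑ l ∈ Icc 1 n, ∑ i ∈ range (n + 1), ∑ j ∈ range (n + 1),
      (i + l).descFactorial l * P.coeff (i + l) * ((j + l).descFactorial l * P.coeff (j + l)) *
        (((1 / 2) ^ (i + j + 1) - (-1 / 2) ^ (i + j + 1)) / (i + j + 1)) := by
  have hsupp : beta P = ∑ l ∈ Icc 1 n,
      ∫ x in (-(1 : ℝ) / 2)..(1 / 2), ((derivative^[l] P).eval x) ^ 2 := by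
    refine sum_subset (Icc_subset_Icc_right hn) fun l hl hnl => ?_
    simp_all [iterate_derivative_eq_zero]
  rw [hsupp]
  refine sum_congr rfl fun l _ => ?_
  have hlt : (derivative^[l] P).natDegree < n + 1 :=
    Nat.lt_succ_of_le ((natDegree_iterate_derivative P l).trans (Nat.sub_le_of_le_add (by omega)))
  simp only [integral_sq_eval_eq_sum_coeff _ hlt, coeff_iterate_derivative, nsmul_eq_mul]

/-- The Jiang–Shu smoothness indicator of any degree-6 polynomial written in the shifted
Legendre basis is a sum of perfect squares. -/
theorem smoothness_indicator_r7 (upt ux ux2 ux3 ux4 ux5 ux6 : ℝ) :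
    beta (C upt + C ux * L1 + C ux2 * L2 + C ux3 * L3 + C ux4 * L4
        + C ux5 * L5 + C ux6 * L6) =
      (ux + ux3 / 10 + ux5 / 126) ^ 2
        + (13 / 3) * (ux2 + (123 / 455) * ux4 + (85 / 2002) * ux6) ^ 2
        + (781 / 20) * (ux3 + (26045 / 49203) * ux5) ^ 2
        + (1421461 / 2275) * (ux4 + (81596225 / 93816426) * ux6) ^ 2
        + (21520059541 / 1377684) * ux5 ^ 2
        + (15510384942580921 / 27582029244) * ux6 ^ 2 := by
  have hdeg : (C upt + C ux * L1 + C ux2 * L2 + C ux3 * L3 + C ux4 * L4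
        + C ux5 * L5 + C ux6 * L6).natDegree ≤ 6 := by
    unfold L1 L2 L3 L4 L5 L6; compute_degree
  rw [beta_eq_sum_coeff _ hdeg, show Icc 1 6 = {1, 2, 3, 4, 5, 6} from rfl]
  simp [sum_range_succ, L1, L2, L3, L4, L5, L6, coeff_X, coeff_C, coeff_X_pow, Nat.descFactorial]
  ring
end
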